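/- arXiv:2406.04587 — 9 statements merged into one kernel-verified Lean document; each statement's English description precedes it below -/
import Mathlib

section
/- Let g : ℝⁿ → ℝⁿ be the piecewise-linear map g(x) = A_L x + bμ if x₁ ≤ 0 and g(x) = A_R x + bμ if x₁ ≥ 0, where A_L and A_R agree in all columns except possibly the first. Let pᵀ = e₁ᵀ adj(I - A_L) and s = pᵀ b μ. If det(I - A_L) > 0, det(I - A_R) < 0, and s > 0, then for every x ∈ ℝⁿ, pᵀ g(x) ≥ pᵀ x + s. -/
/-!
Write `M = 1 - A_L`, `N = 1 - A_R`. Row `0` of an adjugate consists of the cofactors of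
column `0`, so it ignores that column and `p` is row `0` of both `adj M` and `adj N`.
Since `adj M * M = det M • 1`, this gives `pᵀ A_L x = pᵀ x - det M · x₁` and
`pᵀ A_R x = pᵀ x - det N · x₁`, so `pᵀ g(x) = pᵀ x + s - det(·) · x₁`, and the sign
conditions make the last term nonnegative on the corresponding half-space.
-/

open Matrix

namespace Matrix

variable {n R : Type*} [Fintype n] [DecidableEq n] [CommRing R]

theorem adjugate_row_dotProduct_mulVec (A : Matrix n n R) (i : n) (x : n → R) :
    adjugate A i ⬝ᵥ A *ᵥ x = A.det * x i := by
  change (adjugate A *ᵥ A *ᵥ x) i = _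
  rw [mulVec_mulVec, adjugate_mul, smul_mulVec, one_mulVec, Pi.smul_apply, smul_eq_mul]

theorem adjugate_row_eq_of_col_eq {A B : Matrix n n R} (j : n)
    (h : ∀ k, k ≠ j → ∀ i, A i k = B i k) : adjugate A j = adjugate B j := by
  ext k
  rw [← transpose_apply (adjugate A), ← transpose_apply (adjugate B), adjugate_transpose,
    adjugate_transpose, adjugate_def, adjugate_def]
  simp only [of_apply, transpose_transpose, cramer_apply]
  congr 1
  ext i l
  by_cases hl : l = j
  · simp only [hl, updateCol_self]
  · rw [updateCol_ne hl, updateCol_ne hl, h l hl]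

theorem adjugate_one_sub_row_dotProduct_mulVec (A : Matrix n n R) (i : n) (x : n → R) :
    adjugate (1 - A) i ⬝ᵥ A *ᵥ x = adjugate (1 - A) i ⬝ᵥ x - (1 - A).det * x i := by
  rw [← adjugate_row_dotProduct_mulVec, sub_mulVec, one_mulVec, dotProduct_sub, sub_sub_cancel]

end Matrix

theorem pwl_map_increase_general (n : ℕ) (AL AR : Matrix (Fin (n+1)) (Fin (n+1)) ℝ)
    (hcols : ∀ j : Fin (n+1), j ≠ 0 → (fun i => AL i j) = (fun i => AR i j))
    (b : Fin (n+1) → ℝ) (μ : ℝ)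
    (g : (Fin (n+1) → ℝ) → (Fin (n+1) → ℝ))
    (hg : ∀ x, g x = if x 0 ≤ 0 then AL.mulVec x + μ • b else AR.mulVec x + μ • b)
    (p : Fin (n+1) → ℝ) (hp : p = (adjugate (1 - AL)) 0)
    (s : ℝ) (hs : s = (p ⬝ᵥ b) * μ)
    (hdetL : 0 < (1 - AL).det) (hdetR : (1 - AR).det < 0) :
    ∀ x, p ⬝ᵥ g x ≥ p ⬝ᵥ x + s := by
  have hpR : p = adjugate (1 - AR) 0 := by
    refine hp.trans (adjugate_row_eq_of_col_eq 0 fun k hk i => ?_)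
    simp only [Matrix.sub_apply, congrFun (hcols k hk) i]
  have hpb : p ⬝ᵥ μ • b = s := by rw [hs, dotProduct_smul, smul_eq_mul, mul_comm]
  intro x
  rw [hg x]
  split_ifs with hx
  · rw [dotProduct_add, hpb, hp, adjugate_one_sub_row_dotProduct_mulVec, ← hp]
    nlinarith
  · rw [dotProduct_add, hpb, hpR, adjugate_one_sub_row_dotProduct_mulVec, ← hpR]
    nlinarith

/-- If `det(I - A_L) > 0`, `det(I - A_R) < 0`, and `s = pᵀ b μ > 0`, then the
piecewise-linear map `g` satisfies `pᵀ g(x) ≥ pᵀ x + s` for all `x`. -/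
theorem pwl_map_increase (n : ℕ) (AL AR : Matrix (Fin (n+1)) (Fin (n+1)) ℝ)
    (hcols : ∀ j : Fin (n+1), j ≠ 0 → (fun i => AL i j) = (fun i => AR i j))
    (b : Fin (n+1) → ℝ) (μ : ℝ)
    (g : (Fin (n+1) → ℝ) → (Fin (n+1) → ℝ))
    (hg : ∀ x, g x = if x 0 ≤ 0 then AL.mulVec x + μ • b else AR.mulVec x + μ • b)
    (p : Fin (n+1) → ℝ) (hp : p = (adjugate (1 - AL)) 0)
    (s : ℝ) (hs : s = (p ⬝ᵥ b) * μ)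
    (hdetL : 0 < (1 - AL).det) (hdetR : (1 - AR).det < 0) (hspos : 0 < s) :
    ∀ x, p ⬝ᵥ g x ≥ p ⬝ᵥ x + s :=
  pwl_map_increase_general n AL AR hcols b μ g hg p hp s hs hdetL hdetR
end

section
/- Let g be the continuous piecewise-linear map g(x) = A_L x + bμ for x₁ ≤ 0 and g(x) = A_R x + bμ for x₁ ≥ 0, with A_L and A_R agreeing in all but possibly their first columns, det(I - A_L) ≠ 0, det(I - A_R) ≠ 0. Suppose the fixed point x^L = (I - A_L)^{-1} b μ of the left piece satisfies x^L₁ > 0 (virtual) and the fixed point x^R = (I - A_R)^{-1} b μ of the right piece satisfies x^R₁ < 0 (virtual). Then every forward orbit of g is unbounded: for every x ∈ ℝⁿ, ‖g^m(x)‖ → ∞ as m → ∞. -/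
open Matrix

/-- If both fixed points of the piecewise-linear map `g` are virtual, then every
forward orbit of `g` diverges: `‖g^m(x)‖ → ∞`. -/
theorem pwl_map_orbits_diverge (n : ℕ) (AL AR : Matrix (Fin (n+1)) (Fin (n+1)) ℝ)
    (hcols : ∀ j : Fin (n+1), j ≠ 0 → (fun i => AL i j) = (fun i => AR i j))
    (b : Fin (n+1) → ℝ) (μ : ℝ)
    (g : (Fin (n+1) → ℝ) → (Fin (n+1) → ℝ))
    (hg : ∀ x, g x = if x 0 ≤ 0 then AL.mulVec x + μ • b else AR.mulVec x + μ • b)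
    (hdetL : (1 - AL).det ≠ 0) (hdetR : (1 - AR).det ≠ 0)
    (hL : 0 < ((1 - AL)⁻¹.mulVec (μ • b)) 0)
    (hR : ((1 - AR)⁻¹.mulVec (μ • b)) 0 < 0) :
    ∀ x, Filter.Tendsto (fun m => ‖g^[m] x‖) Filter.atTop Filter.atTop := by
  set B : Matrix (Fin (n+1)) (Fin (n+1)) ℝ := 1 - AL with hBdef
  set C : Matrix (Fin (n+1)) (Fin (n+1)) ℝ := 1 - AR with hCdef
  have hB : IsUnit B.det := isUnit_iff_ne_zero.mpr hdetL
  have hC : IsUnit C.det := isUnit_iff_ne_zero.mpr hdetR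
  set w : Fin (n+1) → ℝ := (Pi.single 0 1) ᵥ* B⁻¹ with hwdef
  have h1 : w ᵥ* B = Pi.single 0 1 := by
    rw [hwdef, Matrix.vecMul_vecMul, Matrix.nonsing_inv_mul B hB, Matrix.vecMul_one]
  set c : ℝ := w ⬝ᵥ (μ • b) with hcdef
  have hc : 0 < c := by
    have : c = (B⁻¹.mulVec (μ • b)) 0 := by
      rw [hcdef, hwdef, ← Matrix.dotProduct_mulVec, single_dotProduct, one_mul]
    rw [this]; exact hL
  set σ : ℝ := (w ᵥ* C) 0 with hσdef
  have h2 : w ᵥ* C = Pi.single 0 σ := by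
    funext j
    by_cases hj : j = 0
    · subst hj; simp [hσdef]
    · have hALR : ∀ i, AL i j = AR i j := fun i => congrFun (hcols j hj) i
      have : (w ᵥ* C) j = (w ᵥ* B) j := by
        simp only [Matrix.vecMul, dotProduct, hBdef, hCdef, Matrix.sub_apply,
          Matrix.one_apply]
        exact Finset.sum_congr rfl fun i _ => by rw [hALR i]
      rw [this, h1, Pi.single_eq_of_ne hj, Pi.single_eq_of_ne hj]
  have h3 : w = (Pi.single 0 σ) ᵥ* C⁻¹ := by
    rw [← h2, Matrix.vecMul_vecMul, Matrix.mul_nonsing_inv C hC, Matrix.vecMul_one]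
  have hσ : σ < 0 := by
    have hc2 : c = σ * (C⁻¹.mulVec (μ • b)) 0 := by
      rw [hcdef, h3, ← Matrix.dotProduct_mulVec, single_dotProduct]
    nlinarith [hc, hR]
  -- Key monotonicity: w ⬝ᵥ g x ≥ w ⬝ᵥ x + c
  have hkey : ∀ x : Fin (n+1) → ℝ, w ⬝ᵥ x + c ≤ w ⬝ᵥ g x := by
    intro x
    rw [hg x]
    by_cases hx : x 0 ≤ 0
    · rw [if_pos hx, dotProduct_add, Matrix.dotProduct_mulVec]
      have hA : w ᵥ* AL = w - Pi.single 0 1 := by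
        rw [← h1, hBdef, Matrix.vecMul_sub, Matrix.vecMul_one]; ring_nf
      rw [hA, sub_dotProduct, single_dotProduct, one_mul, ← hcdef]
      linarith
    · rw [if_neg hx, dotProduct_add, Matrix.dotProduct_mulVec]
      have hA : w ᵥ* AR = w - Pi.single 0 σ := by
        rw [← h2, hCdef, Matrix.vecMul_sub, Matrix.vecMul_one]; ring_nf
      rw [hA, sub_dotProduct, single_dotProduct, ← hcdef]
      push_neg at hx
      nlinarith
  -- Iterate
  have hiter : ∀ (x : Fin (n+1) → ℝ) (m : ℕ), w ⬝ᵥ x + m * c ≤ w ⬝ᵥ g^[m] x := by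
    intro x m
    induction m with
    | zero => simp
    | succ k ih =>
      have := hkey (g^[k] x)
      rw [Function.iterate_succ_apply']
      push_cast
      linarith
  -- dot product bound by norm
  set W : ℝ := ∑ j, |w j| with hWdef
  have hdot : ∀ v : Fin (n+1) → ℝ, w ⬝ᵥ v ≤ W * ‖v‖ := by
    intro v
    rw [hWdef, Finset.sum_mul]
    refine Finset.sum_le_sum fun j _ => ?_
    calc w j * v j ≤ |w j * v j| := le_abs_self _
      _ = |w j| * |v j| := abs_mul _ _
      _ ≤ |w j| * ‖v‖ := by
          have := norm_le_pi_norm v j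
          exact mul_le_mul_of_nonneg_left (by simpa using this) (abs_nonneg _)
  have hW : 0 < W := by
    have h := hdot (μ • b)
    by_contra hWn
    push_neg at hWn
    have : W * ‖μ • b‖ ≤ 0 := mul_nonpos_of_nonpos_of_nonneg hWn (norm_nonneg _)
    linarith [hc, h]
  intro x
  have hbound : ∀ m : ℕ, (w ⬝ᵥ x + m * c) / W ≤ ‖g^[m] x‖ := by
    intro m
    have h1 := hiter x m
    have h2 := hdot (g^[m] x)
    rw [div_le_iff₀ hW] at *
    nlinarith
  refine Filter.tendsto_atTop_mono hbound ?_
  apply Filter.Tendsto.atTop_div_const hW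
  apply Filter.tendsto_atTop_add_const_left
  exact Filter.Tendsto.atTop_mul_const hc tendsto_natCast_atTop_atTop
end

section
/- Under the hypotheses that g is the continuous piecewise-linear map with pieces A_L x + bμ (x₁ ≤ 0) and A_R x + bμ (x₁ ≥ 0), det(I - A_L) ≠ 0, det(I - A_R) ≠ 0, and both fixed points of the two pieces are virtual, the map g has no nonempty bounded invariant set; in particular g has no periodic orbit. -/
open Matrix

/-- If both fixed points are virtual then `g` has no nonempty bounded invariant set;
in particular `g` has no periodic orbit. -/
theorem pwl_map_no_bounded_invariant_set (n : ℕ)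
    (AL AR : Matrix (Fin (n+1)) (Fin (n+1)) ℝ)
    (hcols : ∀ j : Fin (n+1), j ≠ 0 → (fun i => AL i j) = (fun i => AR i j))
    (b : Fin (n+1) → ℝ) (μ : ℝ)
    (g : (Fin (n+1) → ℝ) → (Fin (n+1) → ℝ))
    (hg : ∀ x, g x = if x 0 ≤ 0 then AL.mulVec x + μ • b else AR.mulVec x + μ • b)
    (hdetL : (1 - AL).det ≠ 0) (hdetR : (1 - AR).det ≠ 0)
    (hL : 0 < ((1 - AL)⁻¹.mulVec (μ • b)) 0)
    (hR : ((1 - AR)⁻¹.mulVec (μ • b)) 0 < 0) :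
    (∀ S : Set (Fin (n+1) → ℝ), S.Nonempty → Bornology.IsBounded S →
      ¬ Set.MapsTo g S S) ∧
    (∀ x, ∀ m : ℕ, 0 < m → g^[m] x ≠ x) := by
  classical
  set M := (1 - AL)⁻¹ with hMdef
  set φ : (Fin (n+1) → ℝ) → ℝ := fun x => M.mulVec x 0 with hφdef
  set d : Fin (n+1) → ℝ := fun i => AR i 0 - AL i 0 with hddef
  set ε : ℝ := M.mulVec (μ • b) 0 with hεdef
  have hε : 0 < ε := hL
  have hUL : IsUnit (1 - AL).det := isUnit_iff_ne_zero.mpr hdetL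
  have hUR : IsUnit (1 - AR).det := isUnit_iff_ne_zero.mpr hdetR
  have hMinv : M * (1 - AL) = 1 := Matrix.nonsing_inv_mul _ hUL
  -- AR acts like AL plus a rank-one correction
  have hARL : ∀ x : Fin (n+1) → ℝ, AR.mulVec x = AL.mulVec x + (x 0) • d := by
    intro x; funext i
    simp only [Matrix.mulVec, dotProduct, Pi.add_apply, Pi.smul_apply,
      smul_eq_mul, hddef]
    have hsum : ∀ j : Fin (n+1), AR i j * x j
        = AL i j * x j + (if j = 0 then x 0 * (AR i 0 - AL i 0) else 0) := by
      intro j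
      by_cases hj : j = 0
      · subst hj; simp; ring
      · have := congrFun (hcols j hj) i
        simp [hj, ← this]
    rw [Finset.sum_congr rfl (fun j _ => hsum j), Finset.sum_add_distrib,
      Finset.sum_ite_eq' Finset.univ (0 : Fin (n+1))]
    simp
  -- φ of AL.mulVec
  have hφL : ∀ x : Fin (n+1) → ℝ, M.mulVec (AL.mulVec x) = M.mulVec x - x := by
    intro x
    rw [Matrix.mulVec_mulVec]
    have hMAL : M * AL = M - 1 := by
      have h1 : AL = 1 - (1 - AL) := (sub_sub_cancel 1 AL).symm
      rw [h1, Matrix.mul_sub, Matrix.mul_one, hMinv]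
    rw [hMAL, Matrix.sub_mulVec, Matrix.one_mulVec]
  -- the key sign fact: φ d > 1
  have hφd : 1 < φ d := by
    set y := (1 - AR)⁻¹.mulVec (μ • b) with hydef
    have hy : (1 - AR).mulVec y = μ • b := by
      rw [hydef, Matrix.mulVec_mulVec, Matrix.mul_nonsing_inv _ hUR, Matrix.one_mulVec]
    have hy2 : (1 - AL).mulVec y = μ • b + (y 0) • d := by
      have h1 : (1 - AR).mulVec y = y - AR.mulVec y := by
        rw [Matrix.sub_mulVec, Matrix.one_mulVec]
      have h2 : (1 - AL).mulVec y = y - AL.mulVec y := by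
        rw [Matrix.sub_mulVec, Matrix.one_mulVec]
      rw [h2]
      rw [h1, hARL y] at hy
      have := hy
      funext i
      have h3 := congrFun hy i
      simp only [Pi.sub_apply, Pi.add_apply, Pi.smul_apply, smul_eq_mul] at h3 ⊢
      linarith
    have hεb : ε = μ * (M.mulVec b) 0 := by
      rw [hεdef, Matrix.mulVec_smul]; simp
    have hy3 : y = μ • M.mulVec b + (y 0) • M.mulVec d := by
      have := congrArg (fun v => M.mulVec v) hy2
      simp only [Matrix.mulVec_add, Matrix.mulVec_smul] at this
      rw [Matrix.mulVec_mulVec, hMinv, Matrix.one_mulVec] at this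
      exact this
    have hy0 : y 0 = ε + y 0 * φ d := by
      have h0 := congrFun hy3 0
      simp only [Pi.add_apply, Pi.smul_apply, smul_eq_mul] at h0
      rw [hεb, hφdef]
      exact h0
    have hylt : y 0 < 0 := hR
    -- y0 * (1 - φ d) = ε > 0, y0 < 0 ⇒ 1 - φ d < 0
    nlinarith [hε, hylt, hy0]
  -- φ increases by at least ε under g
  have hstep : ∀ x : Fin (n+1) → ℝ, φ x + ε ≤ φ (g x) := by
    intro x
    rw [hg]
    have hcf := congrFun (hφL x) 0
    simp only [Pi.sub_apply] at hcf
    split_ifs with h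
    · have he : φ (AL.mulVec x + μ • b) = φ x - x 0 + ε := by
        show (M.mulVec (AL.mulVec x + μ • b)) 0 = _
        rw [Matrix.mulVec_add, Pi.add_apply, hcf]
      rw [he]; linarith
    · push_neg at h
      have he : φ (AR.mulVec x + μ • b) = φ x - x 0 + x 0 * φ d + ε := by
        show (M.mulVec (AR.mulVec x + μ • b)) 0 = _
        rw [hARL x, Matrix.mulVec_add, Pi.add_apply, Matrix.mulVec_add,
          Pi.add_apply, hcf, Matrix.mulVec_smul, Pi.smul_apply, smul_eq_mul]
      rw [he]
      nlinarith [hφd, h]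
  have hiter : ∀ (m : ℕ) (x : Fin (n+1) → ℝ), φ x + m * ε ≤ φ (g^[m] x) := by
    intro m
    induction m with
    | zero => intro x; simp
    | succ k ih =>
      intro x
      rw [Function.iterate_succ_apply']
      have h1 := hstep (g^[k] x)
      have h2 := ih x
      push_cast
      linarith
  constructor
  · intro S hne hbd hmaps
    obtain ⟨x, hx⟩ := hne
    have horb : ∀ m : ℕ, g^[m] x ∈ S := by
      intro m
      induction m with
      | zero => simpa using hx
      | succ k ih => rw [Function.iterate_succ_apply']; exact hmaps ih
    obtain ⟨R, hRS⟩ := hbd.exists_norm_le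
    set C : ℝ := (∑ j, |M 0 j|) * R with hCdef
    have hφbd : ∀ y ∈ S, φ y ≤ C := by
      intro y hy
      have h1 : |φ y| ≤ ∑ j, |M 0 j| * |y j| := by
        calc |φ y| = |∑ j, M 0 j * y j| := by
              simp [hφdef, Matrix.mulVec, dotProduct]
          _ ≤ ∑ j, |M 0 j * y j| := Finset.abs_sum_le_sum_abs _ _
          _ = ∑ j, |M 0 j| * |y j| := by simp [abs_mul]
      have h2 : ∀ j, |M 0 j| * |y j| ≤ |M 0 j| * R := by
        intro j
        have hyj : |y j| ≤ ‖y‖ := by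
          simpa [Real.norm_eq_abs] using norm_le_pi_norm y j
        exact mul_le_mul_of_nonneg_left (hyj.trans (hRS y hy)) (abs_nonneg _)
      have h3 : ∑ j, |M 0 j| * |y j| ≤ C := by
        rw [hCdef, Finset.sum_mul]
        exact Finset.sum_le_sum (fun j _ => h2 j)
      calc φ y ≤ |φ y| := le_abs_self _
        _ ≤ _ := h1
        _ ≤ C := h3
    obtain ⟨m, hm⟩ := exists_nat_gt ((C - φ x) / ε)
    have hm2 : C - φ x < m * ε := by
      rw [div_lt_iff₀ hε] at hm; linarith
    have := hiter m x
    have := hφbd _ (horb m)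
    linarith
  · intro x m hm hfix
    have h1 := hiter m x
    rw [hfix] at h1
    have h2 : (1 : ℝ) ≤ m := by exact_mod_cast hm
    nlinarith [hε]
end

section
/- For the two-dimensional piecewise-linear map g with A_L = [[δ_L + 1 − α, 1], [−δ_L, 0]], A_R = [[δ_R + 1 + α, 1], [−δ_R, 0]], b = (1,0), μ > 0 and α > 0, the inequality (g(x))₁ + (g(x))₂ ≥ x₁ + x₂ + μ holds for all x ∈ ℝ². Consequently every forward orbit of g diverges. -/
open Matrix

/-- For the 2D example, `(g x)₁ + (g x)₂ ≥ x₁ + x₂ + μ` for all `x`, and every forward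
orbit of `g` diverges. -/
theorem example_increase_and_diverge (δL δR α μ : ℝ) (hα : 0 < α) (hμ : 0 < μ)
    (g : (Fin 2 → ℝ) → (Fin 2 → ℝ))
    (hg : ∀ x, g x = if x 0 ≤ 0
      then (!![δL + 1 - α, 1; -δL, 0]).mulVec x + μ • ![1, 0]
      else (!![δR + 1 + α, 1; -δR, 0]).mulVec x + μ • ![1, 0]) :
    (∀ x, g x 0 + g x 1 ≥ x 0 + x 1 + μ) ∧
    (∀ x, Filter.Tendsto (fun m => ‖g^[m] x‖) Filter.atTop Filter.atTop) := by
  have key : ∀ x, g x 0 + g x 1 ≥ x 0 + x 1 + μ := by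
    intro x
    rw [hg x]
    by_cases h : x 0 ≤ 0 <;> simp [h, mulVec, dotProduct, Fin.sum_univ_two] <;> nlinarith
  refine ⟨key, fun x => ?_⟩
  have hsum : ∀ m : ℕ, g^[m] x 0 + g^[m] x 1 ≥ x 0 + x 1 + m * μ := by
    intro m
    induction m with
    | zero => simp
    | succ n ih =>
      rw [Function.iterate_succ_apply']
      have := key (g^[n] x)
      push_cast
      nlinarith
  have hnorm : ∀ m : ℕ, ‖g^[m] x‖ ≥ (x 0 + x 1 + m * μ) / 2 := by
    intro m
    have h0 : g^[m] x 0 ≤ ‖g^[m] x‖ := le_trans (le_abs_self _) (norm_le_pi_norm (g^[m] x) 0)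
    have h1 : g^[m] x 1 ≤ ‖g^[m] x‖ := le_trans (le_abs_self _) (norm_le_pi_norm (g^[m] x) 1)
    have := hsum m
    linarith
  refine Filter.tendsto_atTop_mono hnorm ?_
  apply Filter.Tendsto.atTop_div_const two_pos
  apply Filter.tendsto_atTop_add_const_left
  exact Filter.Tendsto.atTop_mul_const hμ tendsto_natCast_atTop_atTop
end

section
/- Consider the piecewise-linear continuous ODE ẋ = A_L x + bμ for x₁ ≤ 0, ẋ = A_R x + bμ for x₁ ≥ 0, with A_L, A_R agreeing except possibly in their first columns, det(A_L) ≠ 0 and det(A_R) ≠ 0. If the equilibrium x^L = −A_L^{-1} bμ satisfies x^L₁ > 0 and the equilibrium x^R = −A_R^{-1} bμ satisfies x^R₁ < 0 (i.e. both equilibria are virtual), then every solution φ(t) satisfies ‖φ(t)‖ → ∞ as t → ±∞; in particular the system has no bounded invariant set. -/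
open Matrix Filter

lemma grow_aux {g g' : ℝ → ℝ} {ε : ℝ} (hε : 0 < ε)
    (hg : ∀ t, HasDerivAt g (g' t) t) (hbd : ∀ t, ε ≤ g' t) :
    Tendsto (fun t => |g t|) atTop atTop ∧ Tendsto (fun t => |g t|) atBot atTop := by
  set h : ℝ → ℝ := fun t => g t - ε * t with hh
  have hd : ∀ t, HasDerivAt h (g' t - ε) t := fun t =>
    (hg t).sub (((hasDerivAt_id t).const_mul ε).congr_deriv (by ring))
  have hmono : Monotone h := by
    have hdiff : Differentiable ℝ h := fun t => (hd t).differentiableAt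
    apply monotone_of_deriv_nonneg hdiff
    intro t
    rw [(hd t).deriv]
    linarith [hbd t]
  have htop : Tendsto g atTop atTop := by
    apply tendsto_atTop_mono' _ (_ : ∀ᶠ t in atTop, h 0 + ε * t ≤ g t)
    · exact tendsto_atTop_add_const_left _ _ (tendsto_id.const_mul_atTop hε)
    · filter_upwards [eventually_ge_atTop (0:ℝ)] with t ht
      have := hmono ht
      simp only [hh] at this ⊢
      linarith
  have hbot : Tendsto g atBot atBot := by
    apply tendsto_atBot_mono' _ (_ : ∀ᶠ t in atBot, g t ≤ h 0 + ε * t)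
    · exact tendsto_atBot_add_const_left _ _ (tendsto_id.const_mul_atBot hε)
    · filter_upwards [eventually_le_atBot (0:ℝ)] with t ht
      have := hmono ht
      simp only [hh] at this ⊢
      linarith
  exact ⟨tendsto_abs_atTop_atTop.comp htop, tendsto_abs_atBot_atTop.comp hbot⟩

set_option maxHeartbeats 1000000 in
/-- Nonsmooth fold for piecewise-linear continuous ODEs: if both equilibria are
virtual then every solution diverges as `t → ±∞`. -/
theorem pwl_ode_virtual_equilibria_diverge (n : ℕ)
    (AL AR : Matrix (Fin (n+1)) (Fin (n+1)) ℝ)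
    (hcols : ∀ j : Fin (n+1), j ≠ 0 → (fun i => AL i j) = (fun i => AR i j))
    (b : Fin (n+1) → ℝ) (μ : ℝ)
    (F : (Fin (n+1) → ℝ) → (Fin (n+1) → ℝ))
    (hF : ∀ x, F x = if x 0 ≤ 0 then AL.mulVec x + μ • b else AR.mulVec x + μ • b)
    (hdetL : AL.det ≠ 0) (hdetR : AR.det ≠ 0)
    (hL : 0 < (-(AL⁻¹.mulVec (μ • b))) 0)
    (hR : (-(AR⁻¹.mulVec (μ • b))) 0 < 0)
    (φ : ℝ → (Fin (n+1) → ℝ)) (hφ : ∀ t, HasDerivAt φ (F (φ t)) t) :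
    Filter.Tendsto (fun t => ‖φ t‖) Filter.atTop Filter.atTop ∧
    Filter.Tendsto (fun t => ‖φ t‖) Filter.atBot Filter.atTop := by
  classical
  set v : Fin (n+1) → ℝ := μ • b with hv
  set Wlin : (Fin (n+1) → ℝ) →ₗ[ℝ] ℝ := (LinearMap.proj 0).comp (cramer AL) with hWlin
  set W : (Fin (n+1) → ℝ) →L[ℝ] ℝ := LinearMap.toContinuousLinearMap Wlin with hW
  have hWapp : ∀ x, W x = cramer AL x 0 := fun x => rfl
  -- W of AL.mulVec
  have hWAL : ∀ x : Fin (n+1) → ℝ, W (AL.mulVec x) = AL.det * x 0 := by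
    intro x
    rw [hWapp, cramer_eq_adjugate_mulVec, mulVec_mulVec, adjugate_mul,
      smul_mulVec, one_mulVec, Pi.smul_apply, smul_eq_mul]
  -- columns agree off 0, so updating column 0 identifies the matrices
  have hcol0 : AL.updateCol 0 (fun i => AR i 0) = AR := by
    ext i j
    rw [updateCol_apply]
    by_cases hj : j = 0
    · simp [hj]
    · simp only [hj, if_false]
      exact congrFun (hcols j hj) i
  have hWAR : ∀ x : Fin (n+1) → ℝ, W (AR.mulVec x) = AR.det * x 0 := by
    intro x
    have hmv : AR.mulVec x
        = AL.mulVec x + x 0 • (fun i => AR i 0 - AL i 0) := by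
      funext i
      simp only [Pi.add_apply, Pi.smul_apply, smul_eq_mul, mulVec, dotProduct]
      have : ∀ j : Fin (n+1), AR i j * x j - AL i j * x j
          = if j = 0 then (AR i 0 - AL i 0) * x 0 else 0 := by
        intro j
        by_cases hj : j = 0
        · subst hj; simp; ring
        · simp only [hj, if_false]
          rw [← congrFun (hcols j hj) i]
          ring
      have hsum : ∑ j, (AR i j * x j - AL i j * x j) = (AR i 0 - AL i 0) * x 0 := by
        rw [Finset.sum_congr rfl (fun j _ => this j)]
        simp
      have := Finset.sum_sub_distrib (s := Finset.univ)
        (f := fun j => AR i j * x j) (g := fun j => AL i j * x j)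
      rw [this] at hsum
      linarith [hsum]
    rw [hmv, _root_.map_add, _root_.map_smul, hWAL]
    have hcolL : W (fun i => AL i 0) = AL.det := by
      rw [hWapp, cramer_apply]
      rw [show (AL.updateCol 0 fun i => AL i 0) = AL from updateCol_eq_self AL 0]
    have hcolR : W (fun i => AR i 0) = AR.det := by
      rw [hWapp, cramer_apply, hcol0]
    have : (fun i => AR i 0 - AL i 0) = (fun i => AR i 0) - (fun i => AL i 0) := rfl
    rw [this, _root_.map_sub, hcolL, hcolR]
    simp only [smul_eq_mul]
    ring
  set c : ℝ := W v with hc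
  -- the inverse formulas
  have hcL : (AL⁻¹.mulVec v) 0 = (AL.det)⁻¹ * c := by
    rw [Matrix.inv_def, smul_mulVec, Pi.smul_apply, smul_eq_mul,
      Ring.inverse_eq_inv', hc, hWapp, cramer_eq_adjugate_mulVec]
  have hcR : (AR⁻¹.mulVec v) 0 = (AR.det)⁻¹ * c := by
    have hcram : cramer AR v 0 = cramer AL v 0 := by
      rw [cramer_apply, cramer_apply]
      congr 1
      ext i j
      rw [updateCol_apply, updateCol_apply]
      by_cases hj : j = 0
      · simp [hj]
      · simp only [hj, if_false]
        exact (congrFun (hcols j hj) i).symm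
    rw [Matrix.inv_def, smul_mulVec, Pi.smul_apply, smul_eq_mul,
      Ring.inverse_eq_inv', hc, hWapp, ← hcram, cramer_eq_adjugate_mulVec]
  have hL' : (AL.det)⁻¹ * c < 0 := by
    have := hL; rw [Pi.neg_apply, hcL] at this; linarith
  have hR' : 0 < (AR.det)⁻¹ * c := by
    have := hR; rw [Pi.neg_apply, hcR] at this; linarith
  -- derivative of W ∘ φ
  have hg : ∀ t, HasDerivAt (fun t => W (φ t)) (W (F (φ t))) t := fun t =>
    (W.hasFDerivAt).comp_hasDerivAt t (hφ t)
  have hWF : ∀ x : Fin (n+1) → ℝ,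
      W (F x) = if x 0 ≤ 0 then AL.det * x 0 + c else AR.det * x 0 + c := by
    intro x
    rw [hF]
    split_ifs with h
    · rw [_root_.map_add, hWAL, ← hc]
    · rw [_root_.map_add, hWAR, ← hc]
  -- reduce to divergence of |W (φ t)|
  suffices habs : Tendsto (fun t => |W (φ t)|) atTop atTop ∧
      Tendsto (fun t => |W (φ t)|) atBot atTop by
    have hCpos : (0:ℝ) < ‖W‖ + 1 := by positivity
    have hle : ∀ t, |W (φ t)| / (‖W‖ + 1) ≤ ‖φ t‖ := by
      intro t
      rw [div_le_iff₀ hCpos]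
      calc |W (φ t)| = ‖W (φ t)‖ := rfl
        _ ≤ ‖W‖ * ‖φ t‖ := W.le_opNorm (φ t)
        _ ≤ ‖φ t‖ * (‖W‖ + 1) := by nlinarith [norm_nonneg (φ t), norm_nonneg W]
    exact ⟨tendsto_atTop_mono hle (habs.1.atTop_div_const hCpos),
      tendsto_atTop_mono hle (habs.2.atTop_div_const hCpos)⟩
  rcases lt_trichotomy c 0 with hcneg | hczero | hcpos
  · -- c < 0 : dL > 0, dR < 0, derivative ≤ c
    have hdL : 0 < AL.det := by
      rcases hdetL.lt_or_gt with h | h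
      · exfalso
        have : (AL.det)⁻¹ < 0 := inv_lt_zero.mpr h
        nlinarith
      · exact h
    have hdR : AR.det < 0 := by
      rcases hdetR.lt_or_gt with h | h
      · exact h
      · exfalso
        have : (0:ℝ) < (AR.det)⁻¹ := inv_pos.mpr h
        nlinarith
    have hbd : ∀ t, -c ≤ -W (F (φ t)) := by
      intro t
      rw [hWF]
      split_ifs with h
      · have : AL.det * φ t 0 ≤ 0 := mul_nonpos_of_nonneg_of_nonpos hdL.le h
        linarith
      · push_neg at h
        have : AR.det * φ t 0 ≤ 0 := mul_nonpos_of_nonpos_of_nonneg hdR.le h.le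
        linarith
    have := grow_aux (by linarith : (0:ℝ) < -c)
      (fun t => (hg t).neg) hbd
    simpa using this
  · exfalso; rw [hczero] at hL'; simp at hL'
  · -- c > 0 : dL < 0, dR > 0, derivative ≥ c
    have hdL : AL.det < 0 := by
      rcases hdetL.lt_or_gt with h | h
      · exact h
      · exfalso
        have : (0:ℝ) < (AL.det)⁻¹ := inv_pos.mpr h
        nlinarith
    have hdR : 0 < AR.det := by
      rcases hdetR.lt_or_gt with h | h
      · exfalso
        have : (AR.det)⁻¹ < 0 := inv_lt_zero.mpr h
        nlinarith
      · exact h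
    have hbd : ∀ t, c ≤ W (F (φ t)) := by
      intro t
      rw [hWF]
      split_ifs with h
      · have : 0 ≤ AL.det * φ t 0 := by nlinarith
        linarith
      · push_neg at h
        have : 0 ≤ AR.det * φ t 0 := mul_nonneg hdR.le h.le
        linarith
    exact grow_aux hcpos hg hbd
end

section
/- Consider the Filippov sliding vector field f^S(x) = (f^L₁(x) f^R(x) − f^R₁(x) f^L(x)) / (f^L₁(x) − f^R₁(x)) for the truncated Filippov system with f^L(x) = A x + bμ and f^R(x) = c constant. Let qᵀ = e₁ᵀ adj(A) and s = qᵀ b μ. Suppose s > 0, qᵀ c > 0, and c₁ ≠ 0. Then for any x with x₁ = 0 and f^L₁(x) c₁ ≤ 0, the denominator f^L₁(x) − c₁ is nonzero and qᵀ f^S(x) ≥ min(s, qᵀ c) > 0. -/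
/-!
On the switching manifold `x₁ = 0` the row `qᵀ = e₁ᵀ adj(A)` annihilates the linear part of
`f^L`, since `qᵀ A = det(A) e₁ᵀ`; hence `qᵀ f^L(x) = s`. Away from crossing regions,
`r = -f^L₁(x)/c₁ ≥ 0` and `qᵀ f^S(x) = (s + r qᵀc)/(1 + r)` is a convex combination of `s` and
`qᵀ c`, so it is at least their minimum.
-/

open Matrix

theorem Matrix.adjugate_apply_dotProduct_mulVec {n R : Type*} [Fintype n] [DecidableEq n]
    [CommRing R] (A : Matrix n n R) (i : n) (x : n → R) :
    adjugate A i ⬝ᵥ A *ᵥ x = A.det * x i := by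
  change (adjugate A *ᵥ A *ᵥ x) i = _
  rw [mulVec_mulVec, adjugate_mul, smul_mulVec, one_mulVec, Pi.smul_apply, smul_eq_mul]

section Interpolation

variable {K : Type*} [Field K] [LinearOrder K] [IsStrictOrderedRing K]

theorem min_le_add_mul_div_one_add {s Q r : K} (hr : 0 ≤ r) :
    min s Q ≤ (s + r * Q) / (1 + r) := by
  rw [le_div_iff₀ (by positivity)]
  nlinarith [min_le_left s Q, min_le_right s Q]

theorem sub_ne_zero_of_mul_nonpos {u c : K} (hc : c ≠ 0) (h : u * c ≤ 0) : u - c ≠ 0 := by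
  rcases hc.lt_or_gt with hc | hc <;> intro huc <;> nlinarith

theorem min_le_inv_sub_mul_sub {u c s Q : K} (hc : c ≠ 0) (h : u * c ≤ 0) :
    min s Q ≤ (u - c)⁻¹ * (u * Q - c * s) := by
  have hr : 0 ≤ -u / c := by
    rw [neg_div, ← mul_div_mul_right u c hc, ← sq, neg_nonneg]
    exact div_nonpos_of_nonpos_of_nonneg h (sq_nonneg c)
  have huc := sub_ne_zero_of_mul_nonpos hc h
  have hden : 1 + -u / c = -(u - c) / c := by field_simp; ring
  convert min_le_add_mul_div_one_add (Q := Q) hr using 1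
  rw [hden]
  field_simp
  ring

end Interpolation

/-- Estimate for the Filippov sliding vector field of the truncated system: on the
switching manifold, away from crossing regions, `qᵀ f^S(x) ≥ min(s, qᵀ c) > 0`. -/
theorem sliding_vector_field_estimate (n : ℕ) (A : Matrix (Fin (n+1)) (Fin (n+1)) ℝ)
    (b c : Fin (n+1) → ℝ) (μ : ℝ)
    (fL : (Fin (n+1) → ℝ) → (Fin (n+1) → ℝ)) (hfL : ∀ x, fL x = A.mulVec x + μ • b)
    (fS : (Fin (n+1) → ℝ) → (Fin (n+1) → ℝ))
    (hfS : ∀ x, fS x = (fL x 0 - c 0)⁻¹ • ((fL x 0) • c - (c 0) • fL x))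
    (q : Fin (n+1) → ℝ) (hq : q = (adjugate A) 0)
    (s : ℝ) (hs : s = (q ⬝ᵥ b) * μ)
    (hspos : 0 < s) (hqc : 0 < q ⬝ᵥ c) (hc1 : c 0 ≠ 0)
    (x : Fin (n+1) → ℝ) (hx : x 0 = 0) (hcross : fL x 0 * c 0 ≤ 0) :
    fL x 0 - c 0 ≠ 0 ∧ min s (q ⬝ᵥ c) ≤ q ⬝ᵥ fS x ∧ 0 < min s (q ⬝ᵥ c) := by
  have hqfL : q ⬝ᵥ fL x = s := by
    rw [hfL, dotProduct_add, dotProduct_smul, hs, hq, adjugate_apply_dotProduct_mulVec, hx,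
      mul_zero, zero_add, smul_eq_mul, mul_comm]
  have hqfS : q ⬝ᵥ fS x = (fL x 0 - c 0)⁻¹ * (fL x 0 * (q ⬝ᵥ c) - c 0 * s) := by
    simp only [hfS, dotProduct_smul, dotProduct_sub, smul_eq_mul, hqfL]
  exact ⟨sub_ne_zero_of_mul_nonpos hc1 hcross, hqfS ▸ min_le_inv_sub_mul_sub hc1 hcross,
    lt_min hspos hqc⟩
end

section
/- For the truncated Filippov system ẋ = Ax + bμ for x₁ < 0 and ẋ = c for x₁ > 0, suppose x^S is a point with x^S₁ = 0 satisfying f^L₁(x^S) c − c₁ f^L(x^S) = 0 (pseudo-equilibrium equation, where f^L(x) = Ax + bμ), and suppose qᵀ c ≠ 0 where qᵀ = e₁ᵀ adj(A). Then f^L₁(x^S) · c₁ = s c₁² / (qᵀ c), where s = qᵀ b μ. In particular the sign of f^L₁(x^S) f^R₁(x^S) (which determines admissibility of the pseudo-equilibrium) equals the sign of s/(qᵀ c). -/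
open Matrix

/-! Since `adj(A) A = det(A) I`, the functional `qᵀ = e₁ᵀ adj(A)` sends `A x` to `det(A) x₁`, which
vanishes on the switching manifold `x₁ = 0`; hence `qᵀ f^L(x^S) = s`. Applying `qᵀ` to the
pseudo-equilibrium equation `f^L₁ c = c₁ f^L` then gives `f^L₁ (qᵀ c) = c₁ s`. -/

theorem Matrix.adjugate_dotProduct_mulVec {ι R : Type*} [Fintype ι] [DecidableEq ι] [CommRing R]
    (A : Matrix ι ι R) (x : ι → R) (i : ι) :
    adjugate A i ⬝ᵥ A *ᵥ x = A.det * x i := by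
  have h : adjugate A i ⬝ᵥ A *ᵥ x = ((adjugate A * A) *ᵥ x) i := by
    rw [← mulVec_mulVec]; rfl
  rw [h, adjugate_mul, smul_mulVec, one_mulVec, Pi.smul_apply, smul_eq_mul]

theorem dotProduct_mul_eq_of_smul_sub_smul_eq_zero {ι R : Type*} [Fintype ι] [CommRing R]
    {f c : ι → R} {i : ι} (h : f i • c - c i • f = 0) (q : ι → R) :
    f i * (q ⬝ᵥ c) = c i * (q ⬝ᵥ f) := by
  simpa only [dotProduct_sub, dotProduct_smul, smul_eq_mul, dotProduct_zero, sub_eq_zero]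
    using congrArg (q ⬝ᵥ ·) h

/-- Admissibility of the pseudo-equilibrium of the truncated Filippov system:
`f^L₁(x^S) c₁ = s c₁² / (qᵀ c)`. -/
theorem pseudo_equilibrium_admissibility (n : ℕ)
    (A : Matrix (Fin (n+1)) (Fin (n+1)) ℝ) (b c : Fin (n+1) → ℝ) (μ : ℝ)
    (fL : (Fin (n+1) → ℝ) → (Fin (n+1) → ℝ)) (hfL : ∀ x, fL x = A.mulVec x + μ • b)
    (q : Fin (n+1) → ℝ) (hq : q = (adjugate A) 0)
    (s : ℝ) (hs : s = (q ⬝ᵥ b) * μ)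
    (hqc : q ⬝ᵥ c ≠ 0)
    (xS : Fin (n+1) → ℝ) (hxS1 : xS 0 = 0)
    (hpseudo : (fL xS 0) • c - (c 0) • fL xS = 0) :
    fL xS 0 * c 0 = s * (c 0) ^ 2 / (q ⬝ᵥ c) := by
  have hqfL : q ⬝ᵥ fL xS = s := by
    rw [hfL, dotProduct_add, hq, adjugate_dotProduct_mulVec, hxS1, dotProduct_smul, hs, hq,
      smul_eq_mul]
    ring
  have hdot := dotProduct_mul_eq_of_smul_sub_smul_eq_zero hpseudo q
  rw [hqfL] at hdot
  rw [eq_div_iff hqc]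
  linear_combination c 0 * hdot
end

section
/- Consider the sticking vector field f^{St}(x) = (1/(e₁ᵀ A c)) · (e₁ᵀ A c · f(x) − a(x) c) where f(x) = Ax + bμ, a(x) = e₁ᵀ A f(x), and c₁ = 0. Let qᵀ = e₁ᵀ adj(A), s = qᵀ b μ. Suppose x^{St} satisfies x^{St}₁ = 0 and f^{St}(x^{St}) = 0, and qᵀ c ≠ 0. Then a(x^{St}) = (e₁ᵀ A c) · s / (qᵀ c). -/
open Matrix

/-- Acceleration at the pseudo-equilibrium of the truncated hybrid system:
`a(x^{St}) = (e₁ᵀ A c) s / (qᵀ c)`. -/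
theorem sticking_pseudo_equilibrium_acceleration (n : ℕ)
    (A : Matrix (Fin (n+1)) (Fin (n+1)) ℝ) (b c : Fin (n+1) → ℝ) (hc1 : c 0 = 0)
    (μ : ℝ)
    (f : (Fin (n+1) → ℝ) → (Fin (n+1) → ℝ)) (hf : ∀ x, f x = A.mulVec x + μ • b)
    (a : (Fin (n+1) → ℝ) → ℝ) (ha : ∀ x, a x = (A.mulVec (f x)) 0)
    (fSt : (Fin (n+1) → ℝ) → (Fin (n+1) → ℝ))
    (hfSt : ∀ x, fSt x = ((A.mulVec c) 0)⁻¹ • (((A.mulVec c) 0) • f x - a x • c))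
    (hAc : (A.mulVec c) 0 ≠ 0)
    (q : Fin (n+1) → ℝ) (hq : q = (adjugate A) 0)
    (s : ℝ) (hs : s = (q ⬝ᵥ b) * μ)
    (hqc : q ⬝ᵥ c ≠ 0)
    (xSt : Fin (n+1) → ℝ) (hxSt1 : xSt 0 = 0) (hzero : fSt xSt = 0) :
    a xSt = (A.mulVec c) 0 * s / (q ⬝ᵥ c) := by
  -- From fSt xSt = 0, get (Ac)₀ • f xSt = a xSt • c
  have h1 : ((A.mulVec c) 0) • f xSt - a xSt • c = 0 := by
    have := hzero
    rw [hfSt] at this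
    have h := congrArg (fun v => ((A.mulVec c) 0) • v) this
    simpa [smul_smul, mul_inv_cancel₀ hAc] using h
  have h2 : ((A.mulVec c) 0) • f xSt = a xSt • c := by
    have := sub_eq_zero.mp h1; exact this
  -- dot with q
  have h3 : (A.mulVec c) 0 * (q ⬝ᵥ f xSt) = a xSt * (q ⬝ᵥ c) := by
    have := congrArg (fun v => q ⬝ᵥ v) h2
    simpa [dotProduct_smul, smul_eq_mul] using this
  -- q ⬝ᵥ A.mulVec x = det A * x 0
  have hqA : ∀ x : Fin (n+1) → ℝ, q ⬝ᵥ A.mulVec x = A.det * x 0 := by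
    intro x
    have : ((adjugate A * A).mulVec x) 0 = A.det * x 0 := by
      rw [adjugate_mul]
      simp [Matrix.smul_mulVec, Matrix.one_mulVec]
    rw [← Matrix.mulVec_mulVec] at this
    simpa [hq, Matrix.mulVec] using this
  have hqf : q ⬝ᵥ f xSt = s := by
    rw [hf, dotProduct_add, hqA, hxSt1, hs]
    simp [dotProduct_smul, smul_eq_mul]
    ring
  rw [hqf] at h3
  field_simp
  linarith [h3]
end

section
/- Let f be the map f(x) = ((δ_L + 1 − α)x₁ + x₂ + μ, −δ_L x₁ − x₂²) for x₁ ≤ 0 and f(x) = ((δ_R + 1 + α)x₁ + x₂ + μ, −δ_R x₁ − x₂²) for x₁ ≥ 0, with δ_L > 0, δ_R < 0, α > 0. Let η = min(α/(2δ_L²), α/(2δ_R²), 1/√2) and Φ(x) = x₁ + x₂ − 2x₂². Then for every μ > 0 and every x in the closed ball B_η of radius η centred at the origin, Φ(f(x)) − Φ(x) ≥ μ. -/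
set_option maxHeartbeats 1600000


/-- On the closed Euclidean ball of radius `η = min(α/(2δ_L²), α/(2δ_R²), 1/√2)`,
the function `Φ(x) = x₁ + x₂ - 2x₂²` increases by at least `μ` under the map `f`. -/
theorem example_hots_phi_increase (δL δR α μ : ℝ)
    (hδL : 0 < δL) (hδR : δR < 0) (hα : 0 < α) (hμ : 0 < μ)
    (f : (Fin 2 → ℝ) → (Fin 2 → ℝ))
    (hf : ∀ x, f x = if x 0 ≤ 0
      then ![(δL + 1 - α) * x 0 + x 1 + μ, -δL * x 0 - (x 1) ^ 2]
      else ![(δR + 1 + α) * x 0 + x 1 + μ, -δR * x 0 - (x 1) ^ 2])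
    (Φ : (Fin 2 → ℝ) → ℝ) (hΦ : ∀ x, Φ x = x 0 + x 1 - 2 * (x 1) ^ 2)
    (η : ℝ) (hη : η = min (α / (2 * δL ^ 2)) (min (α / (2 * δR ^ 2)) (1 / Real.sqrt 2))) :
    ∀ x : Fin 2 → ℝ, Real.sqrt ((x 0) ^ 2 + (x 1) ^ 2) ≤ η → Φ (f x) - Φ x ≥ μ := by
  intro x hx
  set s := x 0 with hs
  set t := x 1 with ht
  have hs2 : Real.sqrt 2 > 0 := Real.sqrt_pos.mpr (by norm_num)
  have hηL : η ≤ α / (2 * δL ^ 2) := hη ▸ min_le_left _ _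
  have hηR : η ≤ α / (2 * δR ^ 2) := hη ▸ le_trans (min_le_right _ _) (min_le_left _ _)
  have hηs : η ≤ 1 / Real.sqrt 2 := hη ▸ le_trans (min_le_right _ _) (min_le_right _ _)
  have hη0 : 0 ≤ η := le_trans (Real.sqrt_nonneg _) hx
  have hball : s ^ 2 + t ^ 2 ≤ η ^ 2 := by
    nlinarith [Real.sq_sqrt (show (0:ℝ) ≤ s ^ 2 + t ^ 2 by positivity),
      Real.sqrt_nonneg (s ^ 2 + t ^ 2)]
  have hη2 : η ^ 2 ≤ 1 / 2 := by
    have h2 : (1 / Real.sqrt 2) ^ 2 = 1 / 2 := by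
      rw [div_pow, one_pow, Real.sq_sqrt (by norm_num : (0:ℝ) ≤ 2)]
    nlinarith
  have ht2 : t ^ 2 ≤ 1 / 2 := by nlinarith [sq_nonneg s]
  have hsabs : s ^ 2 ≤ η ^ 2 := by nlinarith [sq_nonneg t]
  have hL : 2 * δL ^ 2 * η ≤ α := by
    rw [le_div_iff₀ (by positivity)] at hηL; linarith [hηL]
  have hδR2 : (0:ℝ) < δR ^ 2 := by nlinarith
  have hR : 2 * δR ^ 2 * η ≤ α := by
    rw [le_div_iff₀ (by linarith)] at hηR; linarith [hηR]
  rw [hf x, hΦ x]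
  split_ifs with h
  · -- x 0 ≤ 0
    have hs0 : s ≤ 0 := by rw [hs]; exact h
    have hns : 0 ≤ -s := by linarith
    have habs : -s ≤ η := by nlinarith
    rw [hΦ]
    simp only [Matrix.cons_val_zero, Matrix.cons_val_one, Matrix.head_cons]
    have h1 : 2 * δL ^ 2 * (-s) * (-s) ≤ 2 * δL ^ 2 * (-s) * η :=
      mul_le_mul_of_nonneg_left habs (by positivity)
    have h2 : 2 * δL ^ 2 * η * (-s) ≤ α * (-s) := mul_le_mul_of_nonneg_right hL hns
    have key : -α * s - 2 * δL ^ 2 * s ^ 2 ≥ 0 := by nlinarith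
    have key2 : -4 * δL * s * t ^ 2 ≥ 0 := by
      have := mul_nonneg (mul_nonneg (by positivity : (0:ℝ) ≤ 4 * δL) hns) (sq_nonneg t)
      nlinarith [this]
    have key3 : t ^ 2 - 2 * t ^ 4 ≥ 0 := by nlinarith [sq_nonneg t]
    nlinarith [key, key2, key3]
  · -- x 0 > 0
    push_neg at h
    have hs0 : (0:ℝ) < s := by rw [hs]; exact h
    have habs : s ≤ η := by nlinarith
    rw [hΦ]
    simp only [Matrix.cons_val_zero, Matrix.cons_val_one, Matrix.head_cons]
    have h1 : 2 * δR ^ 2 * s * s ≤ 2 * δR ^ 2 * s * η :=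
      mul_le_mul_of_nonneg_left habs (by positivity)
    have h2 : 2 * δR ^ 2 * η * s ≤ α * s := mul_le_mul_of_nonneg_right hR hs0.le
    have key : α * s - 2 * δR ^ 2 * s ^ 2 ≥ 0 := by nlinarith
    have key2 : -4 * δR * s * t ^ 2 ≥ 0 := by
      have := mul_nonneg (mul_nonneg (by nlinarith : (0:ℝ) ≤ -4 * δR) hs0.le) (sq_nonneg t)
      nlinarith [this]
    have key3 : t ^ 2 - 2 * t ^ 4 ≥ 0 := by nlinarith [sq_nonneg t]
    nlinarith [key, key2, key3]
end
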